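/- arXiv:1201.4507 — 2 statements merged into one kernel-verified Lean document; each statement's English description precedes it below -/
import Mathlib

section
/- For q ≠ 1, q ≠ 2, λ ∈ ℝ, and x with 1-(1-q)λx > 0, one has -λ ∫₀ˣ exp(-λ ∫₀^{x'} (e_q(-λx''))^{q-1} dx'') dx' = (e_q(-λx))^{2-q}/(2-q) - 1/(2-q). -/
/-! With `c = (1 - q) λ`, the integrand of the inner integral is `(e_q(-λt))^(q-1) = (1 - c t)⁻¹`,
so `-λ` times the inner integral is `log (1 - c x') / (1 - q)` and its exponential is
`e_q(-λx')` again. The outer integral is then that of the power `(1 - c t)^(1/(1-q))`,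
which has the primitive `-(1 - c t)^((2-q)/(1-q)) / ((2 - q) λ)`. -/

open Real Set intervalIntegral

theorem rpow_one_div_one_sub_rpow_sub_one {y q : ℝ} (hy : 0 ≤ y) (hq : q ≠ 1) :
    (y ^ (1 / (1 - q))) ^ (q - 1) = y⁻¹ := by
  have hexp : 1 / (1 - q) * (q - 1) = -1 := by
    field_simp [sub_ne_zero.2 hq.symm]
    ring
  rw [← rpow_mul hy, hexp, rpow_neg_one]

theorem integral_inv_one_sub_mul {c x : ℝ} (hc : c ≠ 0) (hx : 0 < 1 - c * x) :
    ∫ t in (0 : ℝ)..x, (1 - c * t)⁻¹ = -log (1 - c * x) / c := by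
  rw [integral_comp_sub_mul (fun u => u⁻¹) hc, mul_zero, sub_zero,
    integral_inv_of_pos hx one_pos, one_div, log_inv, smul_eq_mul]
  ring

theorem integral_one_sub_mul_rpow {c x r : ℝ} (hc : c ≠ 0) (hr : r ≠ -1)
    (hx : 0 < 1 - c * x) :
    ∫ t in (0 : ℝ)..x, (1 - c * t) ^ r = (1 - (1 - c * x) ^ (r + 1)) / (c * (r + 1)) := by
  rw [integral_comp_sub_mul (fun u => u ^ r) hc, mul_zero, sub_zero,
    integral_rpow (Or.inr ⟨hr, notMem_uIcc_of_lt hx one_pos⟩), one_rpow, smul_eq_mul]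
  field_simp

theorem exp_neg_mul_integral_inv_one_sub_mul {q lam x : ℝ} (hq : q ≠ 1) (hlam : lam ≠ 0)
    (hx : 0 < 1 - (1 - q) * lam * x) :
    exp (-(lam * ∫ t in (0 : ℝ)..x, (1 - (1 - q) * lam * t)⁻¹))
      = (1 - (1 - q) * lam * x) ^ (1 / (1 - q)) := by
  have hq' : 1 - q ≠ 0 := sub_ne_zero.2 hq.symm
  rw [integral_inv_one_sub_mul (mul_ne_zero hq' hlam) hx, rpow_def_of_pos hx]
  congr 1
  field_simp

/-- -λ ∫₀ˣ exp(-λ ∫₀^{x'} (e_q(-λx''))^{q-1} dx'') dx'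
    = (e_q(-λx))^{2-q}/(2-q) - 1/(2-q). -/
theorem qexp_double_integral (q lam x : ℝ) (hq1 : q ≠ 1) (hq2 : q ≠ 2)
    (hpos : ∀ t ∈ Set.uIcc (0 : ℝ) x, 1 - (1 - q) * lam * t > 0) :
    -lam * ∫ x' in (0 : ℝ)..x,
        Real.exp (-(lam * ∫ x'' in (0 : ℝ)..x',
          ((1 - (1 - q) * lam * x'') ^ ((1 : ℝ) / (1 - q))) ^ (q - 1)))
      = ((1 - (1 - q) * lam * x) ^ ((1 : ℝ) / (1 - q))) ^ (2 - q) / (2 - q)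
        - 1 / (2 - q) := by
  rcases eq_or_ne lam 0 with rfl | hlam
  · simp
  have hq1' : 1 - q ≠ 0 := sub_ne_zero.2 hq1.symm
  have hq2' : 2 - q ≠ 0 := sub_ne_zero.2 hq2.symm
  have inner : ∀ x' ∈ uIcc 0 x,
      exp (-(lam * ∫ t in (0 : ℝ)..x', ((1 - (1 - q) * lam * t) ^ (1 / (1 - q))) ^ (q - 1)))
        = (1 - (1 - q) * lam * x') ^ (1 / (1 - q)) := by
    intro x' hx'
    rw [← exp_neg_mul_integral_inv_one_sub_mul hq1 hlam (hpos x' hx')]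
    congr 3
    refine integral_congr fun t ht => rpow_one_div_one_sub_rpow_sub_one ?_ hq1
    exact (hpos t (uIcc_subset_uIcc left_mem_uIcc hx' ht)).le
  have hexp_ne : 1 / (1 - q) ≠ -1 := by
    rw [Ne, div_eq_iff hq1']
    intro h
    exact hq2' (by linarith)
  have hx := hpos x right_mem_uIcc
  rw [integral_congr inner, integral_one_sub_mul_rpow (mul_ne_zero hq1' hlam) hexp_ne hx,
    ← rpow_mul hx.le]
  have hsum : 1 / (1 - q) + 1 = 1 / (1 - q) * (2 - q) := by
    field_simp
    ring
  rw [hsum]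
  field_simp
  ring
end

section
/- For q ≠ 1, q ≠ 2, λ ∈ ℝ, differentiable h, and any constant c, the function g(x) = (e_q(-λh(x)))^{-1} · ( (e_q(-λh(x)))^{2-q}/(2-q) + c ) solves g'(x) - λ (e_q(-λh(x)))^{q-1} h'(x) g(x) + λ h'(x) = 0 wherever 1-(1-q)λh(x) > 0. -/
/-!
With `E y = e_q(-λ h y) = (1 - (1 - q) λ h y) ^ (1 / (1 - q))`, the chain rule gives the
`q`-exponential equation `E' = -λ h' E ^ q`. Writing `g = E ^ (1 - q) / (2 - q) + c E⁻¹`, this yields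
`g' = -λ h' ((1 - q) / (2 - q) - c E ^ (q - 2))`, while `λ h' E ^ (q - 1) g = λ h' (1 / (2 - q) + c E ^ (q - 2))`;
the `c`-terms cancel and the rest adds up to `-λ h'`.
-/

open Real

theorem hasDerivAt_rpow_one_div_one_sub {q u' x : ℝ} {u : ℝ → ℝ} (hq : q ≠ 1)
    (hu : HasDerivAt u u' x) (hx : 0 < u x) :
    HasDerivAt (fun y => u y ^ (1 / (1 - q))) (u' / (1 - q) * (u x ^ (1 / (1 - q))) ^ q) x := by
  have hq' : 1 - q ≠ 0 := sub_ne_zero_of_ne hq.symm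
  convert hu.rpow_const (p := 1 / (1 - q)) (Or.inl hx.ne') using 1
  rw [← rpow_mul hx.le, div_mul_eq_mul_div,
    show 1 / (1 - q) * q = 1 / (1 - q) - 1 by field_simp; ring]
  ring

theorem qExp_ode_of_hasDerivAt {q lam v c x : ℝ} {E : ℝ → ℝ} (hq : q ≠ 2)
    (hE : HasDerivAt E (-(lam * v) * E x ^ q) x) (hx : 0 < E x) :
    ∃ d : ℝ,
      HasDerivAt (fun y => E y ^ (-1 : ℝ) * (E y ^ (2 - q) / (2 - q) + c)) d x ∧
      d - lam * E x ^ (q - 1) * v * (E x ^ (-1 : ℝ) * (E x ^ (2 - q) / (2 - q) + c))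
        + lam * v = 0 := by
  have hq' : 2 - q ≠ 0 := sub_ne_zero_of_ne hq.symm
  refine ⟨_, (hE.rpow_const (Or.inl hx.ne')).mul
    (((hE.rpow_const (p := 2 - q) (Or.inl hx.ne')).div_const (2 - q)).add_const c), ?_⟩
  simp only [rpow_sub_one hx.ne', rpow_sub hx, rpow_neg_one, rpow_two]
  field_simp
  ring

/-- g(x) = (e_q(-λh(x)))⁻¹ · ((e_q(-λh(x)))^{2-q}/(2-q) + c) solves
    g'(x) - λ (e_q(-λh(x)))^{q-1} h'(x) g(x) + λ h'(x) = 0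
    wherever 1-(1-q)λh(x) > 0. -/
theorem g_general_solves_ode_general_constraint (q lam c : ℝ) (h : ℝ → ℝ) (h' : ℝ → ℝ)
    (hq1 : q ≠ 1) (hq2 : q ≠ 2)
    (hh : ∀ x, HasDerivAt h (h' x) x) :
    ∀ x : ℝ, 1 - (1 - q) * lam * h x > 0 →
      ∃ d : ℝ,
        HasDerivAt (fun y : ℝ =>
          ((1 - (1 - q) * lam * h y) ^ ((1 : ℝ) / (1 - q))) ^ (-1 : ℝ) *
            (((1 - (1 - q) * lam * h y) ^ ((1 : ℝ) / (1 - q))) ^ (2 - q) / (2 - q) + c)) d x ∧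
        d - lam * (((1 - (1 - q) * lam * h x) ^ ((1 : ℝ) / (1 - q))) ^ (q - 1)) * h' x
              * (((1 - (1 - q) * lam * h x) ^ ((1 : ℝ) / (1 - q))) ^ (-1 : ℝ) *
                 (((1 - (1 - q) * lam * h x) ^ ((1 : ℝ) / (1 - q))) ^ (2 - q) / (2 - q) + c))
          + lam * h' x = 0 := by
  intro x hx
  have hu : HasDerivAt (fun y => 1 - (1 - q) * lam * h y) (-((1 - q) * lam * h' x)) x := by
    simpa using ((hh x).const_mul ((1 - q) * lam)).const_sub 1
  have hE := hasDerivAt_rpow_one_div_one_sub hq1 hu hx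
  rw [show -((1 - q) * lam * h' x) / (1 - q) = -(lam * h' x) by
    field_simp [sub_ne_zero_of_ne hq1.symm]] at hE
  exact qExp_ode_of_hasDerivAt hq2 hE (rpow_pos_of_pos hx _)
end
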